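/- arXiv:1602.03102 — 4 statements merged into one kernel-verified Lean document; each statement's English description precedes it below -/
import Mathlib

section
/- Let v be a vertex of a connected graph G with cycle basis C, and let G*_v be the local dual graph whose vertices are (i) the cycles of C containing v and (ii) the edges of G containing v with nonzero counting number, with a dual edge joining an edge-node ℓ to a cycle-node c whenever ℓ ∈ c. If d*_v is the number of connected components of G*_v and C*_v its cyclomatic number (number of independent cycles), then the vertex counting number satisfies κ_v = 1 - d*_v + C*_v. -/
/-- For a vertex `v` of a connected graph with cycle basis `C`, the
local dual graph `G*_v` (cycle-nodes = basis cycles containing `v`, edge-nodes = edges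
containing `v` with nonzero counting number, dual edges joining an edge-node `ℓ` to a
cycle-node `c` whenever `ℓ ∈ c`) satisfies `κ_v = 1 - d*_v + C*_v`, where `d*_v` is the
number of connected components of `G*_v` and `C*_v` its cyclomatic number. -/
theorem stmt_1
    (E C : Type*) [Fintype E] [Fintype C] [DecidableEq E] [DecidableEq C]
    (eMemC : E → C → Prop) [∀ e c, Decidable (eMemC e c)]
    (vInE : E → Prop) [DecidablePred vInE]
    (vInC : C → Prop) [DecidablePred vInC]
    -- every basis cycle through an edge containing `v` itself contains `v`
    (hkey : ∀ e c, vInE e → eMemC e c → vInC c) :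
    let dstar : E → ℤ := fun e => ((Finset.univ.filter (fun c => eMemC e c)).card : ℤ)
    let κℓ : E → ℤ := fun e => 1 - dstar e
    let κv : ℤ :=
      1 - ((Finset.univ.filter (fun c => vInC c)).card : ℤ)
        - ∑ e ∈ Finset.univ.filter (fun e => vInE e), κℓ e
    -- the local dual graph `G*_v`
    let Vc := {c : C // vInC c}
    let Vt := {e : E // vInE e ∧ κℓ e ≠ 0}
    let G : SimpleGraph (Vc ⊕ Vt) := SimpleGraph.fromRel
      (fun a b => ∃ (c : Vc) (e : Vt), a = Sum.inl c ∧ b = Sum.inr e ∧ eMemC e.1 c.1)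
    let dv : ℤ := (Nat.card G.ConnectedComponent : ℤ)
    let Cv : ℤ := (Nat.card G.edgeSet : ℤ) - (Nat.card (Vc ⊕ Vt) : ℤ) + dv
    κv = 1 - dv + Cv := by
  intro dstar κℓ κv Vc Vt G dv Cv
  classical
  -- vertices count
  have hV : (Nat.card (Vc ⊕ Vt) : ℤ) =
      ((Finset.univ.filter (fun c => vInC c)).card : ℤ)
        + ((Finset.univ.filter (fun e => vInE e ∧ κℓ e ≠ 0)).card : ℤ) := by
    simp [Nat.card_eq_fintype_card, Fintype.card_subtype, Vc, Vt]
  -- edge count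
  have hE : (Nat.card G.edgeSet : ℤ) =
      ∑ e ∈ Finset.univ.filter (fun e => vInE e ∧ κℓ e ≠ 0), dstar e := by
    have hbij : Function.Bijective
        (fun p : {p : Vc × Vt // eMemC p.2.1 p.1.1} =>
          (⟨s(Sum.inl p.1.1, Sum.inr p.1.2), by
            rw [SimpleGraph.mem_edgeSet]
            refine ⟨by simp, Or.inl ⟨p.1.1, p.1.2, rfl, rfl, p.2⟩⟩⟩ : G.edgeSet)) := by
      constructor
      · rintro ⟨⟨c, e⟩, h⟩ ⟨⟨c', e'⟩, h'⟩ hpq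
        simp only [Subtype.mk.injEq, Sym2.eq, Sym2.rel_iff', Prod.mk.injEq] at hpq
        rcases hpq with ⟨h1, h2⟩ | ⟨h1, h2⟩ <;> simp_all
      · rintro ⟨q, hq⟩
        induction q using Sym2.ind with
        | _ a b =>
          rw [SimpleGraph.mem_edgeSet, SimpleGraph.fromRel_adj] at hq
          rcases hq with ⟨hne, ⟨c, e, rfl, rfl, hm⟩ | ⟨c, e, rfl, rfl, hm⟩⟩
          · exact ⟨⟨(c, e), hm⟩, rfl⟩
          · exact ⟨⟨(c, e), hm⟩, by simp [Sym2.eq_swap]⟩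
    have h1 : Nat.card G.edgeSet =
        Fintype.card {p : Vc × Vt // eMemC p.2.1 p.1.1} := by
      rw [Nat.card_eq_fintype_card]
      exact (Fintype.card_of_bijective hbij).symm
    have h2 : Fintype.card {p : Vc × Vt // eMemC p.2.1 p.1.1} =
        ∑ e ∈ Finset.univ.filter (fun e => vInE e ∧ κℓ e ≠ 0),
          (Finset.univ.filter (fun c => eMemC e c)).card := by
      rw [Fintype.card_subtype]
      rw [Finset.card_eq_sum_card_fiberwise
        (f := fun p : Vc × Vt => p.2) (t := Finset.univ) (fun _ _ => Finset.mem_univ _)]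
      rw [show (∑ e ∈ Finset.univ.filter (fun e => vInE e ∧ κℓ e ≠ 0),
            (Finset.univ.filter (fun c => eMemC e c)).card)
          = ∑ e : Vt, (Finset.univ.filter (fun c => eMemC e.1 c)).card from
        Finset.sum_subtype _ (fun e => by simp [Vt]) _]
      refine Finset.sum_congr rfl fun e _ => ?_
      -- fiber over e : Vt
      have : ((Finset.univ.filter fun p : Vc × Vt => eMemC p.2.1 p.1.1).filter
          fun p => p.2 = e).card
          = (Finset.univ.filter (fun c : Vc => eMemC e.1 c.1)).card := by
        apply Finset.card_bij (fun p _ => p.1)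
        · rintro ⟨c, e'⟩ hp
          simp only [Finset.mem_filter] at hp ⊢
          rcases hp with ⟨⟨_, hm⟩, rfl⟩
          exact ⟨Finset.mem_univ _, hm⟩
        · rintro ⟨c, e'⟩ hp ⟨c', e''⟩ hp' h
          simp only [Finset.mem_filter] at hp hp'
          simp_all
        · intro c hc
          simp only [Finset.mem_filter] at hc
          exact ⟨(c, e), by simp [hc.2], rfl⟩
      rw [this]
      -- card over subtype Vc equals card over C with hkey
      have h3 : (Finset.univ.filter (fun c : Vc => eMemC e.1 c.1)).card
          = Fintype.card {c : Vc // eMemC e.1 c.1} := (Fintype.card_subtype _).symm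
      have h4 : Fintype.card {c : Vc // eMemC e.1 c.1}
          = Fintype.card {c : C // vInC c ∧ eMemC e.1 c} :=
        Fintype.card_congr (Equiv.subtypeSubtypeEquivSubtypeInter _ _)
      rw [h3, h4, Fintype.card_subtype]
      congr 1
      apply Finset.filter_congr
      intro c _
      simp only [and_iff_right_iff_imp]
      exact fun hm => hkey e.1 c e.2.1 hm
    rw [h1, h2]
    push_cast
    rfl
  -- sum over κℓ restricts to nonzero part
  have hsum : ∑ e ∈ Finset.univ.filter (fun e => vInE e), κℓ e
      = ∑ e ∈ Finset.univ.filter (fun e => vInE e ∧ κℓ e ≠ 0), κℓ e := by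
    rw [← Finset.filter_filter]
    exact (Finset.sum_filter_ne_zero _).symm
  have hsplit : ∑ e ∈ Finset.univ.filter (fun e => vInE e ∧ κℓ e ≠ 0), κℓ e
      = ((Finset.univ.filter (fun e => vInE e ∧ κℓ e ≠ 0)).card : ℤ)
        - ∑ e ∈ Finset.univ.filter (fun e => vInE e ∧ κℓ e ≠ 0), dstar e := by
    rw [Finset.sum_sub_distrib]
    simp [κℓ]
  show κv = 1 - dv + Cv
  have : Cv = (Nat.card G.edgeSet : ℤ) - (Nat.card (Vc ⊕ Vt) : ℤ) + dv := rfl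
  rw [this, hE, hV]
  show (1 : ℤ) - _ - _ = _
  rw [hsum, hsplit]
  ring
end

section
/- For Ising spins s_i ∈ {-1,+1} on a cycle of length n with BP beliefs parameterized by magnetizations m̆_i ∈ (-1,1) and susceptibilities χ̆_i via b_i(s) = (1 + m̆_i s)/2 and b_i(s,t) = (1 + m̆_i s + m̆_{i+1} t + (m̆_i m̆_{i+1} + χ̆_i) s t)/4, define Q = Π_{i=1}^n χ̆_i / √((1-m̆_i²)(1-m̆_{i+1}²)). Then the normalization constant of the BP cycle factorization equals Z_BP = 1 + Q. -/
open scoped BigOperators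

/-!
Multiplying each edge factor by the belief of its left site gives
`b_i(s) + (χ_i / 4) s · t / b_{i+1}(t)`. Expanding the product over the cycle amounts to
choosing a set of edges that take the second summand. Summing over the spins site by site, a
site where exactly one of its two adjacent edges was chosen contributes `∑_s s = 0` or
`∑_t b(t) · t / b(t) = 0`, so only the empty choice (contributing `1`) and the full cycle
(contributing `∏ χ_i / (1 - m_i²) = Q`) survive.
-/

/-- The value ±1 of an Ising spin encoded by a Boolean. -/
noncomputable def spin (t : Bool) : ℝ := if t then 1 else -1

/-- Single-site BP belief with magnetization `m`. -/
noncomputable def bS (m s : ℝ) : ℝ := (1 + m * s) / 2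

/-- Pairwise BP belief with magnetizations `m1, m2` and susceptibility `χ`. -/
noncomputable def bP (m1 m2 χ s t : ℝ) : ℝ :=
  (1 + m1 * s + m2 * t + (m1 * m2 + χ) * s * t) / 4

namespace Fin

theorem apply_eq_apply_zero_of_apply_sub_one {β : Type*} {n : ℕ} [NeZero n] {ε : Fin n → β}
    (h : ∀ j, ε j = ε (j - 1)) (j : Fin n) : ε j = ε 0 := by
  obtain ⟨k, rfl⟩ : ∃ k, n = k + 1 := Nat.exists_eq_succ_of_ne_zero (NeZero.ne n)
  induction j using Fin.induction with
  | zero => rfl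
  | succ j ih => rw [h, ← Fin.coeSucc_eq_succ, add_sub_cancel_right, ih]

end Fin

section CycleSum

variable {R : Type*} [CommSemiring R] {n : ℕ} [NeZero n]

theorem sum_prod_cycle_of_ne_eq_zero (w : Fin n → Bool → Bool → R)
    (hw : ∀ j x y, x ≠ y → w j x y = 0) :
    ∑ ε : Fin n → Bool, ∏ j, w j (ε j) (ε (j - 1))
      = ∏ j, w j false false + ∏ j, w j true true := by
  refine Fintype.sum_eq_add (fun _ => false) (fun _ => true)
    (fun h => by simpa using congrFun h 0) fun ε hε => ?_
  obtain ⟨j, hj⟩ : ∃ j, ε j ≠ ε (j - 1) := by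
    by_contra! h
    have hconst := Fin.apply_eq_apply_zero_of_apply_sub_one h
    cases h0 : ε 0
    · exact hε.1 (funext fun j => (hconst j).trans h0)
    · exact hε.2 (funext fun j => (hconst j).trans h0)
  exact Finset.prod_eq_zero (Finset.mem_univ j) (hw j _ _ hj)

theorem prod_add_mul_add_one_eq_sum (a b c : Fin n → R) :
    ∏ i, (a i + b i * c (i + 1))
      = ∑ ε : Fin n → Bool,
          ∏ j, (if ε j then b j else a j) * (if ε (j - 1) then c j else 1) := by
  have hsplit : ∀ ε : Fin n → Bool, ∏ i, (if ε i then b i * c (i + 1) else a i)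
      = ∏ j, (if ε j then b j else a j) * (if ε (j - 1) then c j else 1) := by
    intro ε
    have hshift : ∏ i, (if ε i then c (i + 1) else 1) = ∏ j, (if ε (j - 1) then c j else 1) :=
      Fintype.prod_equiv (Equiv.addRight 1) _ _ fun i => by simp
    calc ∏ i, (if ε i then b i * c (i + 1) else a i)
        = ∏ i, (if ε i then b i else a i) * (if ε i then c (i + 1) else 1) :=
          Finset.prod_congr rfl fun i _ => by split_ifs <;> simp
      _ = _ := by rw [Finset.prod_mul_distrib, hshift, ← Finset.prod_mul_distrib]
  calc ∏ i, (a i + b i * c (i + 1))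
      = ∏ i, ∑ e : Bool, (if e then b i * c (i + 1) else a i) :=
        Finset.prod_congr rfl fun i _ => by simp [add_comm]
    _ = _ := by
        rw [Fintype.prod_sum]
        exact Finset.sum_congr rfl fun ε _ => hsplit ε

theorem sum_prod_cycle_add_mul {α : Type*} [Fintype α] (a b c : Fin n → α → R)
    (hac : ∀ j, ∑ s, a j s * c j s = 0) (hb : ∀ j, ∑ s, b j s = 0) :
    ∑ σ : Fin n → α, ∏ i, (a i (σ i) + b i (σ i) * c (i + 1) (σ (i + 1)))
      = ∏ i, ∑ s, a i s + ∏ i, ∑ s, b i s * c i s := by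
  calc ∑ σ : Fin n → α, ∏ i, (a i (σ i) + b i (σ i) * c (i + 1) (σ (i + 1)))
      = ∑ ε : Fin n → Bool, ∑ σ : Fin n → α, ∏ j,
          (if ε j then b j (σ j) else a j (σ j)) * (if ε (j - 1) then c j (σ j) else 1) := by
        rw [Finset.sum_comm]
        exact Finset.sum_congr rfl fun σ _ =>
          prod_add_mul_add_one_eq_sum (fun i => a i (σ i)) (fun i => b i (σ i))
            (fun i => c i (σ i))
    _ = ∑ ε : Fin n → Bool, ∏ j,
          ∑ s, (if ε j then b j s else a j s) * (if ε (j - 1) then c j s else 1) :=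
        Finset.sum_congr rfl fun ε _ => (Fintype.prod_sum fun j s =>
          (if ε j then b j s else a j s) * (if ε (j - 1) then c j s else 1)).symm
    _ = _ := by
        rw [sum_prod_cycle_of_ne_eq_zero fun j x y =>
          ∑ s, (if x then b j s else a j s) * (if y then c j s else 1)]
        · simp
        · rintro j (_ | _) (_ | _) hxy <;> simp_all

end CycleSum

theorem bS_spin_pos {m : ℝ} (hm : |m| < 1) (s : Bool) : 0 < bS m (spin s) := by
  rcases abs_lt.mp hm with ⟨h1, h2⟩
  cases s <;> simp only [bS, spin, Bool.false_eq_true, if_true, if_false] <;> linarith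

theorem bP_eq_bS_mul_bS_add (m1 m2 χ s t : ℝ) :
    bP m1 m2 χ s t = bS m1 s * bS m2 t + χ * s * t / 4 := by
  unfold bP bS; ring

theorem bP_div_mul_bS {m1 m2 s t : ℝ} (χ : ℝ) (h1 : bS m1 s ≠ 0) (h2 : bS m2 t ≠ 0) :
    bP m1 m2 χ s t / (bS m1 s * bS m2 t) * bS m1 s
      = bS m1 s + χ / 4 * s * (t / bS m2 t) := by
  rw [bP_eq_bS_mul_bS_add]
  field_simp

theorem sum_bS_spin (m : ℝ) : ∑ s : Bool, bS m (spin s) = 1 := by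
  simp only [Fintype.sum_bool, bS, spin, if_true, Bool.false_eq_true, if_false]
  ring

theorem sum_spin : ∑ s : Bool, spin s = 0 := by
  simp [spin]

theorem sum_spin_mul_spin_div_bS {m : ℝ} (hm : |m| < 1) :
    ∑ s : Bool, spin s * (spin s / bS m (spin s)) = 4 / (1 - m ^ 2) := by
  rcases abs_lt.mp hm with ⟨h1, h2⟩
  have hp : 1 + m ≠ 0 := by linarith
  have hq : 1 - m ≠ 0 := by linarith
  simp only [Fintype.sum_bool, bS, spin, if_true, Bool.false_eq_true, if_false, mul_one,
    mul_neg, ← sub_eq_add_neg]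
  rw [show 1 - m ^ 2 = (1 + m) * (1 - m) by ring]
  field_simp
  ring

theorem prod_sqrt_mul_apply_add_one {n : ℕ} [NeZero n] {f : Fin n → ℝ}
    (hf : ∀ i, 0 ≤ f i) :
    ∏ i, Real.sqrt (f i * f (i + 1)) = ∏ i, f i := by
  have hshift : ∏ i, Real.sqrt (f (i + 1)) = ∏ i, Real.sqrt (f i) :=
    Fintype.prod_equiv (Equiv.addRight 1) _ _ fun _ => rfl
  simp_rw [Real.sqrt_mul (hf _), Finset.prod_mul_distrib, hshift, ← Finset.prod_mul_distrib,
    Real.mul_self_sqrt (hf _)]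

theorem stmt_6_general (n : ℕ) [NeZero n] (m χ : Fin n → ℝ)
    (hm : ∀ i, |m i| < 1) :
    (∑ σ : Fin n → Bool,
        (∏ i, bP (m i) (m (i + 1)) (χ i) (spin (σ i)) (spin (σ (i + 1)))
            / (bS (m i) (spin (σ i)) * bS (m (i + 1)) (spin (σ (i + 1)))))
          * ∏ i, bS (m i) (spin (σ i)))
      = 1 + ∏ i, χ i / Real.sqrt ((1 - (m i) ^ 2) * (1 - (m (i + 1)) ^ 2)) := by
  have hbS : ∀ i s, bS (m i) (spin s) ≠ 0 := fun i s => (bS_spin_pos (hm i) s).ne'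
  have hm2 : ∀ i, 0 ≤ 1 - m i ^ 2 := fun i => by
    nlinarith [abs_lt.mp (hm i), sq_abs (m i), abs_nonneg (m i)]
  simp_rw [← Finset.prod_mul_distrib, bP_div_mul_bS _ (hbS _ _) (hbS _ _)]
  rw [sum_prod_cycle_add_mul (fun i s => bS (m i) (spin s)) (fun i s => χ i / 4 * spin s)
      (fun i s => spin s / bS (m i) (spin s))]
  · simp_rw [sum_bS_spin, Finset.prod_const_one]
    have hsite : ∀ i, ∑ s : Bool, χ i / 4 * spin s * (spin s / bS (m i) (spin s))
        = χ i / (1 - m i ^ 2) := fun i => by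
      simp_rw [mul_assoc, ← Finset.mul_sum, sum_spin_mul_spin_div_bS (hm i)]
      field_simp
    rw [Finset.prod_congr rfl fun i _ => hsite i, Finset.prod_div_distrib,
      Finset.prod_div_distrib, prod_sqrt_mul_apply_add_one hm2]
  · intro j
    simp only [mul_div_left_comm _ (spin _), div_self (hbS j _), mul_one, sum_spin]
  · intro j
    simp only [← Finset.mul_sum, sum_spin, mul_zero]

/-- For Ising spins on a cycle of length `n` with BP beliefs
parameterized by magnetizations `m̆_i ∈ (-1,1)` and susceptibilities `χ̆_i`, the
normalization constant of the BP cycle factorization equals `Z_BP = 1 + Q`, where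
`Q = Π_i χ̆_i / √((1-m̆_i²)(1-m̆_{i+1}²))`. -/
theorem stmt_6 (n : ℕ) [NeZero n] (m χ : Fin n → ℝ)
    (hm : ∀ i, |m i| < 1)
    (hnn : ∀ (i : Fin n) (s t : Bool),
      0 ≤ bP (m i) (m (i + 1)) (χ i) (spin s) (spin t)) :
    (∑ σ : Fin n → Bool,
        (∏ i, bP (m i) (m (i + 1)) (χ i) (spin (σ i)) (spin (σ (i + 1)))
            / (bS (m i) (spin (σ i)) * bS (m (i + 1)) (spin (σ (i + 1)))))
          * ∏ i, bS (m i) (spin (σ i)))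
      = 1 + ∏ i, χ i / Real.sqrt ((1 - (m i) ^ 2) * (1 - (m (i + 1)) ^ 2)) :=
  stmt_6_general n m χ hm
end

section
/- Let p be a joint distribution of n random variables on a cycle with single marginals p_i and pairwise marginals p_ℓ for edges ℓ of the cycle, and let b_i^c, b_ℓ^c be the beliefs of the unique BP fixed point on the cycle with normalization Z_BP^c, so that the cycle entropy correction ΔS_c = S_c - Σ_i S_i + Σ_ℓ I_ℓ equals log(Z_BP^c) - Σ_i D_KL(p_i‖b_i^c) + Σ_ℓ D_KL(p_ℓ‖b_ℓ^c). Then ΔS_c ≤ log(Z̃_BP^c), where Z̃_BP^c is the normalization constant of p̃^c(x) = (1/Z̃_BP^c) Π_ℓ p_ℓ(x_ℓ) / Π_i p_i(x_i). -/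
/-!
Writing `p̃(s) = Π_ℓ p_ℓ(s_ℓ) / Π_i p_i(s_i)` for the unnormalized Bethe weight of the cycle,
every term of `ΔS_c` is an expectation under `p`; since each vertex of a cycle lies on exactly
two edges, the pointwise logarithms combine to `ΔS_c = Σ_s p(s) log (p̃(s) / p(s))`.
Jensen's inequality for the concave logarithm bounds this by `log Σ_s p̃(s) = log Z̃`.
-/

open Finset Real

theorem sum_mul_log_div_le_log_sum {α : Type*} [Fintype α] (p f : α → ℝ) (hp : ∀ a, 0 < p a)
    (hf : ∀ a, 0 < f a) (hsum : ∑ a, p a = 1) :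
    ∑ a, p a * log (f a / p a) ≤ log (∑ a, f a) := by
  have hjensen := strictConcaveOn_log_Ioi.concaveOn.le_map_sum (t := univ) (w := p)
    (p := fun a => f a / p a) (fun a _ => (hp a).le) hsum
    (fun a _ => Set.mem_Ioi.2 (div_pos (hf a) (hp a)))
  simpa only [smul_eq_mul, mul_div_cancel₀ _ (hp _).ne'] using hjensen

section Pushforward

variable {α β γ : Type*} [Fintype α] [Fintype β] [Fintype γ] [DecidableEq β] [DecidableEq γ]

theorem sum_pushforward_mul (p : α → ℝ) (g : α → β) (h : β → ℝ) :
    ∑ b, (∑ a, if g a = b then p a else 0) * h b = ∑ a, p a * h (g a) := by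
  simp_rw [sum_mul, ite_mul, zero_mul]
  rw [sum_comm]
  simp

theorem sum_sum_pushforward_mul (p : α → ℝ) (g₁ : α → β) (g₂ : α → γ) (h : β → γ → ℝ) :
    ∑ b, ∑ c, (∑ a, if g₁ a = b ∧ g₂ a = c then p a else 0) * h b c
      = ∑ a, p a * h (g₁ a) (g₂ a) := by
  simpa only [Fintype.sum_prod_type, Prod.ext_iff] using
    sum_pushforward_mul p (fun a => (g₁ a, g₂ a)) (fun bc => h bc.1 bc.2)

theorem sum_ite_pos {P : α → Prop} [DecidablePred P] {p : α → ℝ} (hp : ∀ a, 0 < p a) {a : α}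
    (ha : P a) : 0 < ∑ a', if P a' then p a' else 0 :=
  sum_pos' (fun a' _ => by split_ifs <;> simp [(hp a').le]) ⟨a, mem_univ a, by simp [ha, hp]⟩

end Pushforward

section Cycle

variable {ι β : Type*} [Fintype ι] [DecidableEq ι] [Fintype β] [DecidableEq β]

def marginal (p : (ι → β) → ℝ) (i : ι) (x : β) : ℝ :=
  ∑ s, if s i = x then p s else 0

def pairMarginal (p : (ι → β) → ℝ) (i j : ι) (x y : β) : ℝ :=
  ∑ s, if s i = x ∧ s j = y then p s else 0

/-- The cycle has the edges `(i, σ i)`; for `Fin n` with `σ = (· + 1)` this is `p̃^c` up to `Z̃`. -/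
noncomputable def cycleBetheWeight (σ : Equiv.Perm ι) (p : (ι → β) → ℝ) (s : ι → β) : ℝ :=
  (∏ i, pairMarginal p i (σ i) (s i) (s (σ i))) / ∏ i, marginal p i (s i)

variable {p : (ι → β) → ℝ}

theorem marginal_pos (hp : ∀ s, 0 < p s) (i : ι) (s : ι → β) : 0 < marginal p i (s i) :=
  sum_ite_pos hp rfl

theorem pairMarginal_pos (hp : ∀ s, 0 < p s) (i j : ι) (s : ι → β) :
    0 < pairMarginal p i j (s i) (s j) :=
  sum_ite_pos hp ⟨rfl, rfl⟩

theorem cycleBetheWeight_pos (σ : Equiv.Perm ι) (hp : ∀ s, 0 < p s) (s : ι → β) :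
    0 < cycleBetheWeight σ p s :=
  div_pos (prod_pos fun i _ => pairMarginal_pos hp i (σ i) s)
    (prod_pos fun i _ => marginal_pos hp i s)

theorem sum_marginal_mul (i : ι) (h : β → ℝ) :
    ∑ x, marginal p i x * h x = ∑ s, p s * h (s i) :=
  sum_pushforward_mul p (· i) h

theorem sum_pairMarginal_mul (i j : ι) (h : β → β → ℝ) :
    ∑ x, ∑ y, pairMarginal p i j x y * h x y = ∑ s, p s * h (s i) (s j) :=
  sum_sum_pushforward_mul p (· i) (· j) h

theorem log_cycleBetheWeight_div (σ : Equiv.Perm ι) (hp : ∀ s, 0 < p s) (s : ι → β) :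
    log (cycleBetheWeight σ p s / p s)
      = -log (p s) + ∑ i, log (marginal p i (s i))
        + ∑ i, log (pairMarginal p i (σ i) (s i) (s (σ i))
            / (marginal p i (s i) * marginal p (σ i) (s (σ i)))) := by
  have hm := fun i => (marginal_pos hp i s).ne'
  have hpm := fun i => (pairMarginal_pos hp i (σ i) s).ne'
  have hshift : ∑ i, log (marginal p (σ i) (s (σ i))) = ∑ i, log (marginal p i (s i)) :=
    Equiv.sum_comp σ fun i => log (marginal p i (s i))
  rw [log_div (cycleBetheWeight_pos σ hp s).ne' (hp s).ne', cycleBetheWeight,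
    log_div (prod_ne_zero_iff.2 fun i _ => hpm i) (prod_ne_zero_iff.2 fun i _ => hm i),
    log_prod fun i _ => hpm i, log_prod fun i _ => hm i]
  simp only [log_div (hpm _) (mul_ne_zero (hm _) (hm _)), log_mul (hm _) (hm _),
    sum_sub_distrib, sum_add_distrib, hshift]
  ring

theorem cycle_entropy_correction_eq (σ : Equiv.Perm ι) (hp : ∀ s, 0 < p s) :
    (-∑ s, p s * log (p s)) - ∑ i, (-∑ x, marginal p i x * log (marginal p i x))
      + ∑ i, ∑ x, ∑ y, pairMarginal p i (σ i) x y
          * log (pairMarginal p i (σ i) x y / (marginal p i x * marginal p (σ i) y))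
      = ∑ s, p s * log (cycleBetheWeight σ p s / p s) := by
  simp only [sum_marginal_mul, sum_pairMarginal_mul, log_cycleBetheWeight_div σ hp, mul_add,
    sum_add_distrib, mul_sum, mul_neg, sum_neg_distrib, sub_neg_eq_add]
  congr 2 <;> exact sum_comm

end Cycle

theorem stmt_11_general (n q : ℕ) [NeZero n]
    (p : (Fin n → Fin q) → ℝ) (hp : ∀ s, 0 < p s) (hsum : ∑ s, p s = 1) :
    let pi : Fin n → Fin q → ℝ := fun i x => ∑ s, if s i = x then p s else 0
    let pl : Fin n → Fin q → Fin q → ℝ :=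
      fun i x y => ∑ s, if s i = x ∧ s (i + 1) = y then p s else 0
    let S : ℝ := -∑ s, p s * Real.log (p s)
    let Si : Fin n → ℝ := fun i => -∑ x, pi i x * Real.log (pi i x)
    let Il : Fin n → ℝ :=
      fun i => ∑ x, ∑ y, pl i x y * Real.log (pl i x y / (pi i x * pi (i + 1) y))
    let ΔS : ℝ := S - ∑ i, Si i + ∑ i, Il i
    let Ztilde : ℝ :=
      ∑ s : Fin n → Fin q, (∏ i, pl i (s i) (s (i + 1))) / ∏ i, pi i (s i)
    ΔS ≤ Real.log Ztilde := by
  intro pi pl S Si Il ΔS Ztilde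
  have hΔS : ΔS = ∑ s, p s * log (cycleBetheWeight (Equiv.addRight 1) p s / p s) :=
    cycle_entropy_correction_eq (Equiv.addRight 1) hp
  rw [hΔS]
  exact sum_mul_log_div_le_log_sum p _ hp (cycleBetheWeight_pos _ hp) hsum

/-- Let `p` be a (fully supported) joint distribution of `n` variables
on a cycle with single marginals `p_i` and pairwise marginals `p_ℓ` for the edges
`ℓ = (i, i+1)` of the cycle. The cycle entropy correction
`ΔS_c = S_c - Σ_i S_i + Σ_ℓ I_ℓ` satisfies `ΔS_c ≤ log(Z̃_BP^c)`, where `Z̃_BP^c` is the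
normalization constant of `p̃^c(x) = (1/Z̃_BP^c) Π_ℓ p_ℓ(x_ℓ) / Π_i p_i(x_i)`. -/
theorem stmt_11 (n q : ℕ) [NeZero n] (hq : 0 < q)
    (p : (Fin n → Fin q) → ℝ) (hp : ∀ s, 0 < p s) (hsum : ∑ s, p s = 1) :
    let pi : Fin n → Fin q → ℝ := fun i x => ∑ s, if s i = x then p s else 0
    let pl : Fin n → Fin q → Fin q → ℝ :=
      fun i x y => ∑ s, if s i = x ∧ s (i + 1) = y then p s else 0
    let S : ℝ := -∑ s, p s * Real.log (p s)
    let Si : Fin n → ℝ := fun i => -∑ x, pi i x * Real.log (pi i x)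
    let Il : Fin n → ℝ :=
      fun i => ∑ x, ∑ y, pl i x y * Real.log (pl i x y / (pi i x * pi (i + 1) y))
    let ΔS : ℝ := S - ∑ i, Si i + ∑ i, Il i
    let Ztilde : ℝ :=
      ∑ s : Fin n → Fin q, (∏ i, pl i (s i) (s (i + 1))) / ∏ i, pi i (s i)
    ΔS ≤ Real.log Ztilde :=
  stmt_11_general n q p hp hsum
end

section
/- With the notation above, if additionally the BP fixed point on the cycle is the global minimizer of the Bethe free energy functional on the cycle (which holds since BP on a single cycle has a unique stable fixed point minimizing the Bethe free energy), then log(Z_BP^c) ≤ ΔS_c, giving the two-sided bound log(Z_BP^c) ≤ ΔS_c ≤ log(Z̃_BP^c). -/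
/-!
Let `R(s) = ∏ p_ℓ / ∏ p_i` be the Bethe product built from the exact marginals of `p`. Going
around the cycle, the node entropies in `ΔS_c` cancel one of the two copies of each node
marginal in the edge terms, which leaves `ΔS_c = 𝔼_p[log (R / p)]`. Jensen's inequality for `log` then gives
`ΔS_c ≤ log ∑ R = log Z̃_BP`. For the lower bound, the BP factorization `p · Z_BP = ∏ b_ℓ / b_i`
turns `ΔS_c - log Z_BP` into `∑_ℓ D_KL(p_ℓ ‖ p_i · b_ℓ / b_i)`, which is nonnegative by Gibbs'
inequality, the reference weights `p_i(x) b_ℓ(x, y) / b_i(x)` having row sums `p_i(x)` by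
consistency of the beliefs.
-/

open Finset Real

namespace Real

theorem sub_le_mul_log_div {a b : ℝ} (ha : 0 ≤ a) (hb : 0 < b) : a - b ≤ a * log (a / b) := by
  rcases ha.eq_or_lt with rfl | ha
  · simpa using hb.le
  · have := mul_le_mul_of_nonneg_left (one_sub_inv_le_log_of_pos (div_pos ha hb)) ha.le
    rwa [inv_div, mul_one_sub, mul_div_cancel₀ _ ha.ne'] at this

theorem sum_mul_log_div_nonneg {ι : Type*} {s : Finset ι} {a b : ι → ℝ}
    (ha : ∀ i ∈ s, 0 ≤ a i) (hb : ∀ i ∈ s, 0 < b i) (hab : ∑ i ∈ s, b i ≤ ∑ i ∈ s, a i) :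
    0 ≤ ∑ i ∈ s, a i * log (a i / b i) :=
  calc 0 ≤ ∑ i ∈ s, (a i - b i) := by rw [sum_sub_distrib]; linarith
    _ ≤ _ := sum_le_sum fun i hi => sub_le_mul_log_div (ha i hi) (hb i hi)

theorem sum_mul_log_div_le_log_sum {ι : Type*} {s : Finset ι} {w r : ι → ℝ}
    (hw : ∀ i ∈ s, 0 < w i) (hw₁ : ∑ i ∈ s, w i = 1) (hr : ∀ i ∈ s, 0 < r i) :
    ∑ i ∈ s, w i * log (r i / w i) ≤ log (∑ i ∈ s, r i) := by
  have := strictConcaveOn_log_Ioi.concaveOn.le_map_sum (fun i hi => (hw i hi).le) hw₁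
    (p := fun i => r i / w i) fun i hi => div_pos (hr i hi) (hw i hi)
  simp only [smul_eq_mul] at this
  rwa [sum_congr rfl fun i hi => mul_div_cancel₀ (r i) (hw i hi).ne'] at this

theorem log_prod_div_prod_div_prod {ι : Type*} {s : Finset ι} {u v w : ι → ℝ}
    (hu : ∀ i ∈ s, 0 < u i) (hv : ∀ i ∈ s, 0 < v i) (hw : ∀ i ∈ s, 0 < w i) :
    log ((∏ i ∈ s, v i) / (∏ i ∈ s, u i) / ∏ i ∈ s, w i) = ∑ i ∈ s, log (v i / (u i * w i)) := by
  rw [div_div, ← prod_mul_distrib, ← prod_div_distrib]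
  exact log_prod fun i hi => (div_pos (hv i hi) (mul_pos (hu i hi) (hw i hi))).ne'

theorem sum_log_add_sum_log_div_mul_perm {ι : Type*} [Fintype ι] (σ : Equiv.Perm ι)
    {u v : ι → ℝ} (hu : ∀ i, 0 < u i) (hv : ∀ i, 0 < v i) :
    ∑ i, log (u i) + ∑ i, log (v i / (u i * u (σ i))) = log ((∏ i, v i) / ∏ i, u i) := by
  have hlog i : log (v i / (u i * u (σ i))) = log (v i) - log (u i) - log (u (σ i)) := by
    rw [log_div (hv i).ne' (mul_pos (hu i) (hu _)).ne', log_mul (hu i).ne' (hu _).ne', sub_sub]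
  rw [log_div (prod_pos fun i _ => hv i).ne' (prod_pos fun i _ => hu i).ne',
    log_prod fun i _ => (hv i).ne', log_prod fun i _ => (hu i).ne']
  simp only [hlog, sum_sub_distrib, Equiv.sum_comp σ (fun i => log (u i))]
  ring

end Real

namespace Fintype

variable {β γ δ : Type*} [Fintype β] [Fintype δ] [DecidableEq γ] [DecidableEq δ]

theorem sum_marginal_mul [Fintype γ] (p : β → ℝ) (f : β → γ) (g : γ → ℝ) :
    ∑ c, (∑ s, if f s = c then p s else 0) * g c = ∑ s, p s * g (f s) := by
  simp only [sum_mul, ite_mul, zero_mul]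
  rw [sum_comm]
  exact Finset.sum_congr rfl fun s _ => by rw [sum_ite_eq]

theorem sum_sum_pairMarginal_mul [Fintype γ] (p : β → ℝ) (f₁ : β → γ) (f₂ : β → δ)
    (g : γ → δ → ℝ) :
    ∑ x, ∑ y, (∑ s, if f₁ s = x ∧ f₂ s = y then p s else 0) * g x y =
      ∑ s, p s * g (f₁ s) (f₂ s) := by
  simpa [Fintype.sum_prod_type] using
    sum_marginal_mul p (fun s => (f₁ s, f₂ s)) fun c => g c.1 c.2

theorem sum_pairMarginal_right (p : β → ℝ) (f₁ : β → γ) (f₂ : β → δ) (x : γ) :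
    ∑ y, (∑ s, if f₁ s = x ∧ f₂ s = y then p s else 0) = ∑ s, if f₁ s = x then p s else 0 := by
  rw [sum_comm]
  refine Finset.sum_congr rfl fun s _ => ?_
  simp only [ite_and]
  split_ifs <;> simp

end Fintype

noncomputable section BetheCycle

variable {ι α : Type*} [Fintype ι] [DecidableEq ι] [Fintype α] [DecidableEq α]
  (σ : Equiv.Perm ι) (p : (ι → α) → ℝ)

def nodeMarginal (i : ι) (x : α) : ℝ := ∑ s, if s i = x then p s else 0

def edgeMarginal (i : ι) (x y : α) : ℝ := ∑ s, if s i = x ∧ s (σ i) = y then p s else 0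

def betheProduct (s : ι → α) : ℝ :=
  (∏ i, edgeMarginal σ p i (s i) (s (σ i))) / ∏ i, nodeMarginal p i (s i)

def entropyCorrection : ℝ :=
  (-∑ s, p s * log (p s)) - ∑ i, (-∑ x, nodeMarginal p i x * log (nodeMarginal p i x))
    + ∑ i, ∑ x, ∑ y, edgeMarginal σ p i x y *
      log (edgeMarginal σ p i x y / (nodeMarginal p i x * nodeMarginal p (σ i) y))

variable {p}

theorem sum_nodeMarginal_mul (i : ι) (g : α → ℝ) :
    ∑ x, nodeMarginal p i x * g x = ∑ s, p s * g (s i) :=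
  Fintype.sum_marginal_mul p _ g

theorem sum_edgeMarginal_mul (i : ι) (g : α → α → ℝ) :
    ∑ x, ∑ y, edgeMarginal σ p i x y * g x y = ∑ s, p s * g (s i) (s (σ i)) :=
  Fintype.sum_sum_pairMarginal_mul p _ _ g

theorem sum_edgeMarginal_right (i : ι) (x : α) :
    ∑ y, edgeMarginal σ p i x y = nodeMarginal p i x :=
  Fintype.sum_pairMarginal_right p _ _ x

theorem nodeMarginal_pos (hp : ∀ s, 0 < p s) (i : ι) (x : α) : 0 < nodeMarginal p i x :=
  sum_pos' (fun s _ => ite_nonneg (hp s).le le_rfl)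
    ⟨fun _ => x, mem_univ _, by simpa using hp _⟩

theorem edgeMarginal_nonneg (hp : ∀ s, 0 ≤ p s) (i : ι) (x y : α) :
    0 ≤ edgeMarginal σ p i x y :=
  sum_nonneg fun s _ => ite_nonneg (hp s) le_rfl

theorem edgeMarginal_apply_pos (hp : ∀ s, 0 < p s) (s : ι → α) (i : ι) :
    0 < edgeMarginal σ p i (s i) (s (σ i)) :=
  sum_pos' (fun t _ => ite_nonneg (hp t).le le_rfl) ⟨s, mem_univ _, by simpa using hp s⟩

theorem betheProduct_pos (hp : ∀ s, 0 < p s) (s : ι → α) : 0 < betheProduct σ p s :=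
  div_pos (prod_pos fun i _ => edgeMarginal_apply_pos σ hp s i)
    (prod_pos fun i _ => nodeMarginal_pos hp i (s i))

theorem entropyCorrection_eq (hp : ∀ s, 0 < p s) :
    entropyCorrection σ p = ∑ s, p s * log (betheProduct σ p s / p s) := by
  have hnode : ∑ i, ∑ x, nodeMarginal p i x * log (nodeMarginal p i x) =
      ∑ s, ∑ i, p s * log (nodeMarginal p i (s i)) :=
    (sum_congr rfl fun i _ => sum_nodeMarginal_mul i _).trans sum_comm
  have hedge : ∑ i, ∑ x, ∑ y, edgeMarginal σ p i x y *
        log (edgeMarginal σ p i x y / (nodeMarginal p i x * nodeMarginal p (σ i) y)) =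
      ∑ s, ∑ i, p s * log (edgeMarginal σ p i (s i) (s (σ i)) /
        (nodeMarginal p i (s i) * nodeMarginal p (σ i) (s (σ i)))) :=
    (sum_congr rfl fun i _ => sum_edgeMarginal_mul σ i _).trans sum_comm
  have hpoint (s : ι → α) : p s * log (betheProduct σ p s / p s) =
      -(p s * log (p s)) + ∑ i, p s * log (nodeMarginal p i (s i)) +
        ∑ i, p s * log (edgeMarginal σ p i (s i) (s (σ i)) /
          (nodeMarginal p i (s i) * nodeMarginal p (σ i) (s (σ i)))) := by
    rw [log_div (betheProduct_pos σ hp s).ne' (hp s).ne', betheProduct,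
      ← Real.sum_log_add_sum_log_div_mul_perm σ (fun i => nodeMarginal_pos hp i (s i))
        (edgeMarginal_apply_pos σ hp s), ← mul_sum, ← mul_sum]
    ring
  rw [entropyCorrection, sum_neg_distrib, sub_neg_eq_add, hnode, hedge, ← sum_neg_distrib,
    ← sum_add_distrib, ← sum_add_distrib]
  exact sum_congr rfl fun s _ => (hpoint s).symm

theorem entropyCorrection_le_log_sum_betheProduct (hp : ∀ s, 0 < p s) (hp₁ : ∑ s, p s = 1) :
    entropyCorrection σ p ≤ log (∑ s, betheProduct σ p s) := by
  rw [entropyCorrection_eq σ hp]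
  exact Real.sum_mul_log_div_le_log_sum (fun s _ => hp s) hp₁
    fun s _ => betheProduct_pos σ hp s

section Factorization

variable {bi : ι → α → ℝ} {bl : ι → α → α → ℝ} {Z : ℝ}

theorem entropyCorrection_eq_log_add (hp : ∀ s, 0 < p s) (hp₁ : ∑ s, p s = 1)
    (hbi : ∀ i x, 0 < bi i x) (hbl : ∀ i x y, 0 < bl i x y)
    (hfact : ∀ s, p s = (∏ i, bl i (s i) (s (σ i)) / bi i (s i)) / Z) :
    entropyCorrection σ p = log Z + ∑ i, ∑ x, ∑ y, edgeMarginal σ p i x y *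
      log (edgeMarginal σ p i x y / (nodeMarginal p i x * (bl i x y / bi i x))) := by
  have hpoint (s : ι → α) : log (betheProduct σ p s / p s) = log Z + ∑ i,
      log (edgeMarginal σ p i (s i) (s (σ i)) /
        (nodeMarginal p i (s i) * (bl i (s i) (s (σ i)) / bi i (s i)))) := by
    have hZ : Z ≠ 0 := fun h => (hp s).ne' (by rw [hfact s, h, div_zero])
    have hprod : p s * Z = ∏ i, bl i (s i) (s (σ i)) / bi i (s i) := by
      rw [hfact s, div_mul_cancel₀ _ hZ]
    rw [← Real.log_prod_div_prod_div_prod (fun i _ => nodeMarginal_pos hp i (s i))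
      (fun i _ => edgeMarginal_apply_pos σ hp s i) (fun i _ => div_pos (hbl i _ _) (hbi i _)),
      ← hprod, ← div_div, ← betheProduct,
      log_div (div_pos (betheProduct_pos σ hp s) (hp s)).ne' hZ]
    ring
  rw [entropyCorrection_eq σ hp, sum_congr rfl fun i _ => sum_edgeMarginal_mul σ i _, sum_comm]
  simp only [hpoint, mul_add, sum_add_distrib, mul_sum]
  rw [← sum_mul, hp₁, one_mul]

theorem log_le_entropyCorrection (hp : ∀ s, 0 < p s) (hp₁ : ∑ s, p s = 1)
    (hbi : ∀ i x, 0 < bi i x) (hbl : ∀ i x y, 0 < bl i x y)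
    (hcons : ∀ i x, ∑ y, bl i x y = bi i x)
    (hfact : ∀ s, p s = (∏ i, bl i (s i) (s (σ i)) / bi i (s i)) / Z) :
    log Z ≤ entropyCorrection σ p := by
  rw [entropyCorrection_eq_log_add σ hp hp₁ hbi hbl hfact, le_add_iff_nonneg_right]
  refine sum_nonneg fun i _ => sum_nonneg fun x _ => Real.sum_mul_log_div_nonneg
    (fun y _ => edgeMarginal_nonneg σ (fun s => (hp s).le) i x y)
    (fun y _ => mul_pos (nodeMarginal_pos hp i x) (div_pos (hbl i x y) (hbi i x))) ?_
  rw [← mul_sum, ← sum_div, hcons, div_self (hbi i x).ne', mul_one, sum_edgeMarginal_right]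

end Factorization

end BetheCycle

theorem stmt_12_general (n q : ℕ) [NeZero n]
    (p : (Fin n → Fin q) → ℝ)
    (bi : Fin n → Fin q → ℝ) (bl : Fin n → Fin q → Fin q → ℝ)
    (hppos : ∀ s, 0 < p s) (hpsum : ∑ s, p s = 1)
    (hbipos : ∀ i x, 0 < bi i x) (hblpos : ∀ i x y, 0 < bl i x y)
    (hcons1 : ∀ i x, ∑ y, bl i x y = bi i x)
    (ZBP : ℝ)
    -- `p` is the BP factorization of the cycle measure
    (hfact : ∀ s, p s = (∏ i, bl i (s i) (s (i + 1)) / bi i (s i)) / ZBP) :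
    let pi : Fin n → Fin q → ℝ := fun i x => ∑ s, if s i = x then p s else 0
    let pl : Fin n → Fin q → Fin q → ℝ :=
      fun i x y => ∑ s, if s i = x ∧ s (i + 1) = y then p s else 0
    let ΔS : ℝ := (-∑ s, p s * Real.log (p s))
        - ∑ i, (-∑ x, pi i x * Real.log (pi i x))
        + ∑ i, ∑ x, ∑ y, pl i x y * Real.log (pl i x y / (pi i x * pi (i + 1) y))
    let Ztilde : ℝ :=
      ∑ s : Fin n → Fin q, (∏ i, pl i (s i) (s (i + 1))) / ∏ i, pi i (s i)
    Real.log ZBP ≤ ΔS ∧ ΔS ≤ Real.log Ztilde :=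
  ⟨log_le_entropyCorrection (Equiv.addRight 1) hppos hpsum hbipos hblpos hcons1 hfact,
    entropyCorrection_le_log_sum_betheProduct (Equiv.addRight 1) hppos hpsum⟩

/-- With the notation of the cycle entropy correction, if the BP
fixed point beliefs `(b_i^c, b_ℓ^c)` on the cycle (with normalization `Z_BP^c`, so that
`p` is the BP factorization) are a global minimizer of the Bethe free energy functional
on the cycle, then `log(Z_BP^c) ≤ ΔS_c`, giving the two-sided bound
`log(Z_BP^c) ≤ ΔS_c ≤ log(Z̃_BP^c)`. -/
theorem stmt_12 (n q : ℕ) [NeZero n] (hq : 0 < q)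
    (p : (Fin n → Fin q) → ℝ)
    (bi : Fin n → Fin q → ℝ) (bl : Fin n → Fin q → Fin q → ℝ)
    (hppos : ∀ s, 0 < p s) (hpsum : ∑ s, p s = 1)
    (hbipos : ∀ i x, 0 < bi i x) (hblpos : ∀ i x y, 0 < bl i x y)
    (hcons1 : ∀ i x, ∑ y, bl i x y = bi i x)
    (hcons2 : ∀ i y, ∑ x, bl i x y = bi (i + 1) y)
    (ZBP : ℝ)
    (hZBP : ZBP = ∑ s : Fin n → Fin q, ∏ i, bl i (s i) (s (i + 1)) / bi i (s i))
    -- `p` is the BP factorization of the cycle measure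
    (hfact : ∀ s, p s = (∏ i, bl i (s i) (s (i + 1)) / bi i (s i)) / ZBP)
    -- the BP fixed point is a global minimizer of the Bethe free energy functional:
    -- its value `-log Z_BP` is below the Bethe free energy of any consistent beliefs
    (hglobal : ∀ (qi : Fin n → Fin q → ℝ) (ql : Fin n → Fin q → Fin q → ℝ),
      (∀ i x, 0 < qi i x) → (∀ i x y, 0 < ql i x y) →
      (∀ i x, ∑ y, ql i x y = qi i x) → (∀ i y, ∑ x, ql i x y = qi (i + 1) y) →
      (∀ i, ∑ x, qi i x = 1) →
      -Real.log ZBP ≤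
        (∑ i, ∑ x, ∑ y, ql i x y * Real.log (ql i x y / (bl i x y / bi i x)))
          - ∑ i, ∑ x, qi i x * Real.log (qi i x)) :
    let pi : Fin n → Fin q → ℝ := fun i x => ∑ s, if s i = x then p s else 0
    let pl : Fin n → Fin q → Fin q → ℝ :=
      fun i x y => ∑ s, if s i = x ∧ s (i + 1) = y then p s else 0
    let ΔS : ℝ := (-∑ s, p s * Real.log (p s))
        - ∑ i, (-∑ x, pi i x * Real.log (pi i x))
        + ∑ i, ∑ x, ∑ y, pl i x y * Real.log (pl i x y / (pi i x * pi (i + 1) y))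
    let Ztilde : ℝ :=
      ∑ s : Fin n → Fin q, (∏ i, pl i (s i) (s (i + 1))) / ∏ i, pi i (s i)
    Real.log ZBP ≤ ΔS ∧ ΔS ≤ Real.log Ztilde :=
  stmt_12_general n q p bi bl hppos hpsum hbipos hblpos hcons1 ZBP hfact
end
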